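/- Covariance weight of a chordless path. Let K = Σ⁻¹ be adapted to G = (V,E) and let π be a path between x and y in G with vertex set P = V(π). If π is chordless (no edge of G joins two nonadjacent vertices of π, equivalently π is the unique path between x and y in the induced subgraph G_P), then ω(π,Σ) = σ_{xy·P̄} × IF_P. -/

import Mathlib

open Matrix BigOperators Finset

variable {V : Type*} [Fintype V] [DecidableEq V]

/-- Submatrix of `M` with rows indexed by `A` and columns indexed by `B`. -/
noncomputable def subm (M : Matrix V V ℝ) (A B : Finset V) : Matrix ↥A ↥B ℝ :=
  Matrix.of fun i j => M i.1 j.1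

/-- Partial covariance matrix `Σ_{AA·B}` of `A` given a disjoint set `B`. -/
noncomputable def pcovOn (M : Matrix V V ℝ) (A B : Finset V) : Matrix ↥A ↥A ℝ :=
  subm M A A - subm M A B * (subm M B B)⁻¹ * subm M B A

/-- Partial covariance matrix `Σ_{AA·Ā}` given the complement of `A`. -/
noncomputable def pcov (M : Matrix V V ℝ) (A : Finset V) : Matrix ↥A ↥A ℝ :=
  pcovOn M A Aᶜ

/-- Inflation factor of `A` on `B`. -/
noncomputable def inflF (M : Matrix V V ℝ) (A B : Finset V) : ℝ :=
  ((subm M A A).det * (subm M B B).det) / (subm M (A ∪ B) (A ∪ B)).det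

/-- The path weight `ω(π, Γ)` of a walk `p`, computed from `Θ = Γ⁻¹`. -/
noncomputable def pathWeight (Γ : Matrix V V ℝ) {G : SimpleGraph V} {x y : V}
    (p : G.Walk x y) : ℝ :=
  (-1 : ℝ) ^ (p.support.toFinset.card + 1) *
    ((subm Γ⁻¹ p.support.toFinsetᶜ p.support.toFinsetᶜ).det / Γ⁻¹.det) *
    (p.darts.map fun d => Γ⁻¹ d.toProd.1 d.toProd.2).prod

/-- The partial covariance weight `ω(π, Σ_{AA·Ā})` of a walk `p` with vertices in `A`,
expressed via `K = Σ⁻¹`: `(−1)^{|P|+1} (det K_{A∖P,A∖P}/det K_AA) ∏ κ_uv`. -/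
noncomputable def partialPathWeight (S : Matrix V V ℝ) (A : Finset V) {G : SimpleGraph V}
    {x y : V} (p : G.Walk x y) : ℝ :=
  (-1 : ℝ) ^ (p.support.toFinset.card + 1) *
    ((subm S⁻¹ (A \ p.support.toFinset) (A \ p.support.toFinset)).det /
      (subm S⁻¹ A A).det) *
    (p.darts.map fun d => S⁻¹ d.toProd.1 d.toProd.2).prod

/-- `K` is adapted to `G` when nonzero off-diagonal entries correspond to edges. -/
def Adapted (K : Matrix V V ℝ) (G : SimpleGraph V) : Prop :=
  ∀ u v : V, u ≠ v → K u v ≠ 0 → G.Adj u v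

/-- Correlation-type scaling of a positive definite matrix. -/
noncomputable def corrScale {ι : Type*} (M : Matrix ι ι ℝ) : Matrix ι ι ℝ :=
  Matrix.of fun i j => M i j / (Real.sqrt (M i i) * Real.sqrt (M j j))

/-- The inflated correlation matrix `Φ^V = diag(K)^{1/2} Σ diag(K)^{1/2}`. -/
noncomputable def inflCorr (S : Matrix V V ℝ) : Matrix V V ℝ :=
  Matrix.of fun u v => Real.sqrt (S⁻¹ u u) * S u v * Real.sqrt (S⁻¹ v v)

/-- The weight `ω(π, M)` of a walk `p` whose vertices lie in `P`, computed in the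
induced subgraph from a matrix `M` indexed by `P`; here `V(π) = P`, so the determinant
factor (over the empty set) is `1`. -/
noncomputable def subPathWeight {P : Finset V} (M : Matrix ↥P ↥P ℝ) {G : SimpleGraph V}
    {x y : V} (p : G.Walk x y) (hp : ∀ v ∈ p.support, v ∈ P) : ℝ :=
  (-1 : ℝ) ^ (p.support.toFinset.card + 1) * (1 / M⁻¹.det) *
    (p.darts.attach.map fun d =>
      M⁻¹ ⟨d.1.toProd.1, hp _ (SimpleGraph.Walk.dart_fst_mem_support_of_mem_darts p d.2)⟩
          ⟨d.1.toProd.2, hp _ (SimpleGraph.Walk.dart_snd_mem_support_of_mem_darts p d.2)⟩).prod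

/-- Product of partial correlations `ρ_{uv·V∖{u,v}} = −κ_uv/(√κ_uu √κ_vv)`
over the edges of a walk. -/
noncomputable def prodPartialCorr (S : Matrix V V ℝ) {G : SimpleGraph V} {x y : V}
    (p : G.Walk x y) : ℝ :=
  (p.darts.map fun d => -(corrScale S⁻¹ d.toProd.1 d.toProd.2)).prod

/-- A walk is chordless if every edge of `G` joining two of its vertices is an edge of
the walk. -/
def Chordless {G : SimpleGraph V} {x y : V} (p : G.Walk x y) : Prop :=
  ∀ u v : V, u ∈ p.support → v ∈ p.support → G.Adj u v → s(u, v) ∈ p.edges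

/-- The quantity `φ(π, R) = det((I−R)_{P̄P̄}) ∏ ρ_{uv·V∖{u,v}}`. -/
noncomputable def phiWeight (S : Matrix V V ℝ) {G : SimpleGraph V} {x y : V}
    (p : G.Walk x y) : ℝ :=
  (subm (corrScale S⁻¹) p.support.toFinsetᶜ p.support.toFinsetᶜ).det * prodPartialCorr S p


/-!
Write `K = Σ⁻¹` and `P = V(π)`. The Schur complement formulas give
`K_PP = (Σ_{PP·P̄})⁻¹`, `det K_PP = det Σ_P̄P̄ / det Σ` and `det K_P̄P̄ = det Σ_PP / det Σ`;
hence `σ_{xy·P̄} = adj(K_PP)_{xy} / det K_PP`, `IF_P = det Σ_PP · det K_PP` and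
`ω(π,Σ) = (-1)^{|P|+1} det Σ_PP ∏ κ_uv`. Listing `P` in the order of `π`, adaptedness and
chordlessness make every entry of `K_PP` above the superdiagonal vanish, and the `(x, y)`
entry of the adjugate of such a matrix is `(-1)^{|P|-1}` times the product of its
superdiagonal entries, which are the `κ_uv` along `π`.
-/

theorem Matrix.adjugate_zero_last_of_hessenberg {R : Type*} [CommRing R] {n : ℕ}
    (M : Matrix (Fin (n + 1)) (Fin (n + 1)) R)
    (hM : ∀ i j : Fin (n + 1), (i : ℕ) + 1 < j → M i j = 0) :
    M.adjugate 0 (Fin.last n) = (-1) ^ n * ∏ i : Fin n, M i.castSucc i.succ := by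
  have hminor : (M.updateRow (Fin.last n) (Pi.single 0 1)).submatrix Fin.castSucc Fin.succ =
      M.submatrix Fin.castSucc Fin.succ := by
    ext i j
    exact congrFun (updateRow_ne (Fin.castSucc_lt_last i).ne) j.succ
  have hlower : (M.submatrix Fin.castSucc Fin.succ).IsLowerTriangular := fun i j hij => by
    apply hM
    rw [OrderDual.toDual_lt_toDual, Fin.lt_def] at hij
    simpa using hij
  rw [adjugate_apply, det_succ_row _ (Fin.last n), Fintype.sum_eq_single 0]
  · simp [hminor, det_of_isLowerTriangular _ hlower]
  · intro j hj
    simp [hj]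

noncomputable def finsetSumComplEquiv (P : Finset V) : ↥P ⊕ ↥(Pᶜ : Finset V) ≃ V :=
  (Equiv.sumCongr (Equiv.refl _) (Equiv.subtypeEquivRight fun _ => Finset.mem_compl)).trans
    (Equiv.sumCompl (· ∈ P))

theorem submatrix_finsetSumComplEquiv (M : Matrix V V ℝ) (P : Finset V) :
    M.submatrix (finsetSumComplEquiv P) (finsetSumComplEquiv P) =
      fromBlocks (subm M P P) (subm M P Pᶜ) (subm M Pᶜ P) (subm M Pᶜ Pᶜ) := by
  ext (i | i) (j | j) <;> rfl

theorem subm_inv_eq_inv_pcovOn {S : Matrix V V ℝ} (hS : S.PosDef) (P : Finset V) :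
    subm S⁻¹ P P = (pcovOn S P Pᶜ)⁻¹ := by
  set e := finsetSumComplEquiv P
  set N := fromBlocks (subm S P P) (subm S P Pᶜ) (subm S Pᶜ P) (subm S Pᶜ Pᶜ)
  have hN : S.submatrix e e = N := submatrix_finsetSumComplEquiv S P
  have hD : (subm S Pᶜ Pᶜ).PosDef := hS.submatrix Subtype.val_injective
  have hNpd : N.PosDef := hN ▸ hS.submatrix e.injective
  have := hD.isUnit.invertible
  have := hNpd.isUnit.invertible
  have := invertibleOfFromBlocks₂₂Invertible
    (subm S P P) (subm S P Pᶜ) (subm S Pᶜ P) (subm S Pᶜ Pᶜ)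
  have hinv : S⁻¹.submatrix e e = ⅟N := by
    rw [invOf_eq_nonsing_inv, ← hN, inv_submatrix_equiv]
  have h₁₁ := congrArg toBlocks₁₁ (submatrix_finsetSumComplEquiv S⁻¹ P ▸ hinv)
  rwa [invOf_fromBlocks₂₂_eq, toBlocks_fromBlocks₁₁, toBlocks_fromBlocks₁₁,
    invOf_eq_nonsing_inv, invOf_eq_nonsing_inv] at h₁₁

theorem det_subm_inv {S : Matrix V V ℝ} (hS : S.PosDef) (P : Finset V) :
    (subm S⁻¹ P P).det = (subm S Pᶜ Pᶜ).det / S.det := by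
  have hD : (subm S Pᶜ Pᶜ).PosDef := hS.submatrix Subtype.val_injective
  have := hD.isUnit.invertible
  have hdet : S.det = (subm S Pᶜ Pᶜ).det * (pcovOn S P Pᶜ).det := by
    rw [← det_submatrix_equiv_self (finsetSumComplEquiv P), submatrix_finsetSumComplEquiv,
      det_fromBlocks₂₂, invOf_eq_nonsing_inv]
    rfl
  rw [subm_inv_eq_inv_pcovOn hS, det_nonsing_inv, Ring.inverse_eq_inv', hdet,
    div_mul_cancel_left₀ hD.det_pos.ne']

theorem det_subm_univ (M : Matrix V V ℝ) : (subm M univ univ).det = M.det :=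
  det_submatrix_equiv_self (Equiv.subtypeUnivEquiv mem_univ) M

theorem det_subm_inv_compl_div {S : Matrix V V ℝ} (hS : S.PosDef) (P : Finset V) :
    (subm S⁻¹ Pᶜ Pᶜ).det / S⁻¹.det = (subm S P P).det := by
  rw [det_subm_inv hS, compl_compl, det_nonsing_inv, Ring.inverse_eq_inv', div_inv_eq_mul,
    div_mul_cancel₀ _ hS.det_pos.ne']

theorem inflF_compl {S : Matrix V V ℝ} (hS : S.PosDef) (P : Finset V) :
    inflF S P Pᶜ = (subm S P P).det * (subm S⁻¹ P P).det := by
  rw [inflF, union_compl, det_subm_univ, det_subm_inv hS, mul_div_assoc]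

theorem pcov_apply {S : Matrix V V ℝ} (hS : S.PosDef) (P : Finset V) (a b : ↥P) :
    pcov S P a b = (subm S⁻¹ P P).adjugate a b / (subm S⁻¹ P P).det := by
  have hK : (subm S⁻¹ P P).PosDef := hS.inv.submatrix Subtype.val_injective
  have hpcov : pcov S P = (subm S⁻¹ P P)⁻¹ := by
    rw [subm_inv_eq_inv_pcovOn hS] at hK ⊢
    rw [nonsing_inv_nonsing_inv _ (isUnit_nonsing_inv_det_iff.1 hK.det_pos.ne'.isUnit)]
    rfl
  rw [hpcov, Matrix.inv_def, Matrix.smul_apply, smul_eq_mul, Ring.inverse_eq_inv',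
    inv_mul_eq_div]

section Walk

open SimpleGraph

variable {α : Type*} {G : SimpleGraph α} {x y : α}

theorem SimpleGraph.Walk.prod_darts_map {M : Type*} [CommMonoid M] (g : α → α → M)
    (p : G.Walk x y) :
    (p.darts.map fun d => g d.fst d.snd).prod =
      ∏ i : Fin p.length, g (p.getVert i) (p.getVert (i + 1)) := by
  rw [← List.prod_ofFn]
  congr 1
  refine List.ext_getElem (by simp) fun i _ _ => ?_
  simp [Walk.darts_getElem_eq_getVert]

theorem Chordless.apply_getVert_eq_zero {K : Matrix α α ℝ} (hK : Adapted K G) {p : G.Walk x y}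
    (hp : p.IsPath) (hch : Chordless p) {i j : ℕ} (hj : j ≤ p.length) (hij : i + 1 < j) :
    K (p.getVert i) (p.getVert j) = 0 := by
  have hinj {a b : ℕ} (ha : a ≤ p.length) (hb : b ≤ p.length) (h : p.getVert a = p.getVert b) :
      a = b :=
    hp.getVert_injOn ha hb h
  by_contra h
  have hne : p.getVert i ≠ p.getVert j := fun h' => by
    have := hinj (by omega) hj h'
    omega
  obtain ⟨k, hk, hkij⟩ := (p.mk_mem_edges_iff_exists).1 <|
    hch _ _ (p.getVert_mem_support i) (p.getVert_mem_support j) (hK _ _ hne h)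
  rcases Sym2.eq_iff.1 hkij with ⟨h₁, h₂⟩ | ⟨h₁, h₂⟩ <;>
    have := hinj (by omega) (by omega) h₁ <;> have := hinj (by omega) (by omega) h₂ <;> omega

variable [DecidableEq α]

noncomputable def SimpleGraph.Walk.IsPath.getVertEquiv {p : G.Walk x y} (hp : p.IsPath) :
    Fin (p.length + 1) ≃ p.support.toFinset :=
  Equiv.ofBijective (fun i => ⟨p.getVert i, List.mem_toFinset.2 (p.getVert_mem_support i)⟩) <| by
    refine ⟨fun i j h => Fin.ext <| hp.getVert_injOn (Nat.lt_succ_iff.1 i.2)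
      (Nat.lt_succ_iff.1 j.2) (congrArg Subtype.val h), fun ⟨v, hv⟩ => ?_⟩
    obtain ⟨n, hn, hnl⟩ := Walk.mem_support_iff_exists_getVert.1 (List.mem_toFinset.1 hv)
    exact ⟨⟨n, Nat.lt_succ_of_le hnl⟩, Subtype.ext hn⟩

theorem Chordless.adjugate_subm_support {K : Matrix α α ℝ} (hK : Adapted K G) {p : G.Walk x y}
    (hp : p.IsPath) (hch : Chordless p) :
    (subm K p.support.toFinset p.support.toFinset).adjugate
        ⟨x, List.mem_toFinset.2 p.start_mem_support⟩ ⟨y, List.mem_toFinset.2 p.end_mem_support⟩ =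
      (-1) ^ p.length * (p.darts.map fun d => K d.fst d.snd).prod := by
  set A := subm K p.support.toFinset p.support.toFinset
  set e := hp.getVertEquiv
  have he0 : e 0 = ⟨x, List.mem_toFinset.2 p.start_mem_support⟩ := Subtype.ext p.getVert_zero
  have hel : e (Fin.last _) = ⟨y, List.mem_toFinset.2 p.end_mem_support⟩ :=
    Subtype.ext p.getVert_length
  calc A.adjugate _ _ = A.adjugate.submatrix e e 0 (Fin.last _) := by rw [submatrix_apply, he0, hel]
    _ = (A.submatrix e e).adjugate 0 (Fin.last _) := by rw [adjugate_submatrix_equiv_self]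
    _ = (-1) ^ p.length * ∏ i : Fin p.length, K (p.getVert i) (p.getVert (i + 1)) :=
      Matrix.adjugate_zero_last_of_hessenberg _ fun i j hij =>
        hch.apply_getVert_eq_zero hK hp (Nat.lt_succ_iff.1 j.2) hij
    _ = _ := by rw [p.prod_darts_map fun u v => K u v]

end Walk

theorem chordless_path_weight_general {V : Type*} [Fintype V] [DecidableEq V]
    (S : Matrix V V ℝ) (hS : S.PosDef) (G : SimpleGraph V)
    (hadapt : Adapted S⁻¹ G) {x y : V} (p : G.Walk x y) (hp : p.IsPath)
    (hchordless : Chordless p) :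
    pathWeight S p =
      pcov S p.support.toFinset
          ⟨x, List.mem_toFinset.mpr p.start_mem_support⟩
          ⟨y, List.mem_toFinset.mpr p.end_mem_support⟩ *
        inflF S p.support.toFinset p.support.toFinsetᶜ := by
  have hcard : p.support.toFinset.card = p.length + 1 := by
    rw [List.toFinset_card_of_nodup hp.support_nodup, p.length_support]
  have hK : (subm S⁻¹ p.support.toFinset p.support.toFinset).det ≠ 0 :=
    (hS.inv.submatrix Subtype.val_injective).det_pos.ne'
  rw [pathWeight, det_subm_inv_compl_div hS, pcov_apply hS, inflF_compl hS,
    hchordless.adjugate_subm_support hadapt hp, hcard]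
  field_simp
  ring

/-- the covariance weight of a chordless path is
`ω(π,Σ) = σ_{xy·P̄} × IF_P`. -/
theorem chordless_path_weight {V : Type*} [Fintype V] [DecidableEq V]
    (S : Matrix V V ℝ) (hS : S.PosDef) (G : SimpleGraph V) [DecidableRel G.Adj]
    (hadapt : Adapted S⁻¹ G) {x y : V} (hxy : x ≠ y) (p : G.Walk x y) (hp : p.IsPath)
    (hchordless : Chordless p) :
    pathWeight S p =
      pcov S p.support.toFinset
          ⟨x, List.mem_toFinset.mpr p.start_mem_support⟩
          ⟨y, List.mem_toFinset.mpr p.end_mem_support⟩ *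
        inflF S p.support.toFinset p.support.toFinsetᶜ :=
  chordless_path_weight_general S hS G hadapt p hp hchordless
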